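/- arXiv:1712.07609 — 2 statements merged into one kernel-verified Lean document; each statement's English description precedes it below -/
import Mathlib

section
/- Let X(ℝⁿ) be a translation-invariant Banach function space. Then there exist constants C₁, C₂ > 0 such that for all R > 0 and all y ∈ ℝⁿ: C₁ · min{1, Rⁿ} ≤ ‖χ_{B(y,R)}‖_X ≤ C₂ · max{1, Rⁿ}. -/
open MeasureTheory Filter ENNReal Metric

noncomputable section

/-- A Banach function norm on measurable functions over a measure space `α`,
following Bennett–Sharpley: axioms (A1)–(A5). -/
structure BanachFunctionNorm (α : Type) [MeasureSpace α] where
  ρ : (α → ℝ≥0∞) → ℝ≥0∞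
  ρ_zero : ∀ f, ρ f = 0 ↔ f =ᵐ[volume] 0
  ρ_smul : ∀ (a : NNReal) (f : α → ℝ≥0∞), ρ (fun x => (a : ℝ≥0∞) * f x) = a * ρ f
  ρ_add : ∀ f g, ρ (fun x => f x + g x) ≤ ρ f + ρ g
  ρ_mono : ∀ f g, (∀ᵐ x ∂volume, f x ≤ g x) → ρ f ≤ ρ g
  ρ_fatou : ∀ (f : ℕ → α → ℝ≥0∞),
      (∀ j, ∀ᵐ x ∂volume, f j x ≤ f (j+1) x) →
      ρ (fun x => ⨆ j, f j x) = ⨆ j, ρ (f j)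
  ρ_finite : ∀ E : Set α, MeasurableSet E → volume E < ⊤ → ρ (E.indicator 1) < ⊤
  ρ_loc_embed : ∀ E : Set α, MeasurableSet E → volume E < ⊤ →
      ∃ C : ℝ≥0∞, C < ⊤ ∧ ∀ f : α → ℝ≥0∞, ∫⁻ x in E, f x ∂volume ≤ C * ρ f

/-- The associate (Köthe dual) norm of a Banach function norm. -/
def BanachFunctionNorm.associate {α : Type} [MeasureSpace α]
    (X : BanachFunctionNorm α) (g : α → ℝ≥0∞) : ℝ≥0∞ :=
  ⨆ f ∈ {f : α → ℝ≥0∞ | X.ρ f ≤ 1}, ∫⁻ x, f x * g x ∂volume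

/-!
Translation invariance makes `φ(r) = ‖χ_{B(y,r)}‖_X` independent of `y`. A cubic grid of
mesh `a / (√n + 1)` covers `B(0, r)` by at most `((2√n + 5) max(1, r/a))ⁿ` balls of radius `a`,
so subadditivity of the norm gives `φ(r) ≤ ((2√n + 5) max(1, r/a))ⁿ φ(a)`. Taking `(r, a) = (R, 1)`
gives the upper bound and `(r, a) = (1, R)` the lower one; `φ(1)` is finite and nonzero since the
unit ball has finite positive measure.
-/

namespace BanachFunctionNorm

variable {α : Type} [MeasureSpace α] (X : BanachFunctionNorm α)

theorem ρ_zero_eq_zero : X.ρ 0 = 0 :=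
  (X.ρ_zero 0).2 EventuallyEq.rfl

theorem ρ_sum_le {ι : Type*} (s : Finset ι) (f : ι → α → ℝ≥0∞) :
    X.ρ (∑ i ∈ s, f i) ≤ ∑ i ∈ s, X.ρ (f i) :=
  Finset.le_sum_of_subadditive X.ρ X.ρ_zero_eq_zero.le X.ρ_add s f

theorem ρ_indicator_one_ne_zero {s : Set α} (hs : volume s ≠ 0) : X.ρ (s.indicator 1) ≠ 0 := by
  rwa [Ne, X.ρ_zero, Set.indicator_ae_eq_zero, Function.support_one, Set.inter_univ]

def IsTranslationInvariant {E : Type} [AddGroup E] [MeasureSpace E]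
    (X : BanachFunctionNorm E) : Prop :=
  ∀ (y : E) (f : E → ℝ≥0∞), X.ρ (fun x => f (x - y)) = X.ρ f

end BanachFunctionNorm

theorem Set.indicator_one_le_sum_indicator_one {α ι : Type*} {t : Set α} {s : Finset ι}
    {u : ι → Set α} (h : t ⊆ ⋃ i ∈ s, u i) :
    t.indicator (1 : α → ℝ≥0∞) ≤ ∑ i ∈ s, (u i).indicator 1 := by
  refine Set.indicator_le fun x hx => ?_
  obtain ⟨i, hi, hxi⟩ := Set.mem_iUnion₂.1 (h hx)
  calc (1 : α → ℝ≥0∞) x = (u i).indicator 1 x := (Set.indicator_of_mem hxi _).symm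
    _ ≤ ∑ j ∈ s, (u j).indicator 1 x :=
        Finset.single_le_sum (f := fun j => (u j).indicator 1 x) (fun _ _ => zero_le) hi
    _ = (∑ j ∈ s, (u j).indicator 1) x := (Finset.sum_apply x s _).symm

namespace BanachFunctionNorm.IsTranslationInvariant

variable {E : Type} [NormedAddCommGroup E] [MeasureSpace E] {X : BanachFunctionNorm E}

theorem ρ_indicator_ball (hX : X.IsTranslationInvariant) (y : E) (r : ℝ) :
    X.ρ ((ball y r).indicator 1) = X.ρ ((ball 0 r).indicator 1) := by
  classical
  refine Eq.trans ?_ (hX y _)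
  congr 1
  funext x
  simp only [Set.indicator_apply, mem_ball, dist_eq_norm, sub_zero, Pi.one_apply]

theorem ρ_indicator_ball_le_card_mul (hX : X.IsTranslationInvariant) (y : E) {r a : ℝ}
    {s : Finset E} (hs : ball 0 r ⊆ ⋃ z ∈ s, ball z a) :
    X.ρ ((ball y r).indicator 1) ≤ s.card * X.ρ ((ball 0 a).indicator 1) :=
  calc X.ρ ((ball y r).indicator 1) = X.ρ ((ball 0 r).indicator 1) := hX.ρ_indicator_ball y r
    _ ≤ X.ρ (∑ z ∈ s, (ball z a).indicator 1) :=
        X.ρ_mono _ _ (Eventually.of_forall (Set.indicator_one_le_sum_indicator_one hs))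
    _ ≤ ∑ z ∈ s, X.ρ ((ball z a).indicator 1) := X.ρ_sum_le s _
    _ = s.card * X.ρ ((ball 0 a).indicator 1) := by
        simp only [hX.ρ_indicator_ball, Finset.sum_const, nsmul_eq_mul]

end BanachFunctionNorm.IsTranslationInvariant

theorem round_mem_Icc_of_abs_le {t c : ℝ} (h : |t| ≤ c) :
    round t ∈ Finset.Icc (-(⌈c⌉₊ : ℤ)) ⌈c⌉₊ := by
  rw [Finset.mem_Icc, ← abs_le]
  have hround : |(round t : ℝ)| < ⌈c⌉₊ + 1 := by
    have := abs_sub_abs_le_abs_sub (round t : ℝ) t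
    rw [abs_sub_comm] at this
    linarith [abs_sub_round t, Nat.le_ceil c]
  have : |round t| < (⌈c⌉₊ : ℤ) + 1 := by exact_mod_cast hround
  omega

theorem EuclideanSpace.dist_le_sqrt_card_mul {ι : Type*} [Fintype ι] {x y : EuclideanSpace ℝ ι}
    {δ : ℝ} (hδ : 0 ≤ δ) (h : ∀ i, dist (x i) (y i) ≤ δ) :
    dist x y ≤ √(Fintype.card ι) * δ := by
  rw [EuclideanSpace.dist_eq, ← Real.sqrt_sq hδ, ← Real.sqrt_mul (Nat.cast_nonneg _)]
  refine Real.sqrt_le_sqrt ?_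
  calc ∑ i, dist (x i) (y i) ^ 2 ≤ ∑ _i : ι, δ ^ 2 :=
        Finset.sum_le_sum fun i _ => pow_le_pow_left₀ dist_nonneg (h i) 2
    _ = Fintype.card ι * δ ^ 2 := by simp

theorem EuclideanSpace.exists_finset_card_le_ball_subset_iUnion_ball (n : ℕ) {r a : ℝ}
    (hr : 0 ≤ r) (ha : 0 < a) :
    ∃ s : Finset (EuclideanSpace ℝ (Fin n)),
      (s.card : ℝ) ≤ ((2 * √n + 5) * max 1 (r / a)) ^ n ∧ ball 0 r ⊆ ⋃ z ∈ s, ball z a := by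
  classical
  -- This mesh makes the half-diagonal `√n δ / 2` of a grid cell shorter than `a`, also for `n = 0`.
  set δ := a / (√n + 1) with hδ_def
  have hδ : 0 < δ := by positivity
  set m := ⌈r / δ⌉₊
  let grid : (Fin n → ℤ) → EuclideanSpace ℝ (Fin n) := fun v => WithLp.toLp 2 fun i => δ * v i
  set T := Fintype.piFinset fun _ : Fin n => Finset.Icc (-(m : ℤ)) m
  refine ⟨T.image grid, ?_, fun x hx => ?_⟩
  · have hm : (m : ℝ) < (√n + 1) * (r / a) + 1 :=
      calc (m : ℝ) < r / δ + 1 := Nat.ceil_lt_add_one (div_nonneg hr hδ.le)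
        _ = (√n + 1) * (r / a) + 1 := by rw [hδ_def]; field_simp
    have hT : T.card = (2 * m + 1) ^ n := by
      simp only [T, Fintype.card_piFinset, Int.card_Icc, Finset.prod_const, Finset.card_univ,
        Fintype.card_fin]
      congr 1
      omega
    calc (((T.image grid).card : ℕ) : ℝ) ≤ ((2 * m + 1) ^ n : ℕ) := by
          exact_mod_cast hT ▸ Finset.card_image_le
      _ ≤ ((2 * √n + 5) * max 1 (r / a)) ^ n := by
          push_cast
          gcongr
          have := le_max_left 1 (r / a)
          have := le_max_right 1 (r / a)
          nlinarith [Real.sqrt_nonneg n, div_nonneg hr ha.le]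
  · let v : Fin n → ℤ := fun i => round (x i / δ)
    have hv : v ∈ T := Fintype.mem_piFinset.2 fun i => round_mem_Icc_of_abs_le <| by
      rw [abs_div, abs_of_pos hδ]
      gcongr
      exact (PiLp.norm_apply_le x i).trans (mem_ball_zero_iff.1 hx).le
    refine Set.mem_iUnion₂.2 ⟨grid v, Finset.mem_image_of_mem grid hv, ?_⟩
    have hcoord : ∀ i, dist (x i) (grid v i) ≤ δ / 2 := fun i => by
      have hx_eq : x i - δ * round (x i / δ) = δ * (x i / δ - round (x i / δ)) := by
        field_simp
      rw [Real.dist_eq, show grid v i = δ * round (x i / δ) from rfl, hx_eq, abs_mul, abs_of_pos hδ]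
      linarith [mul_le_mul_of_nonneg_left (abs_sub_round (x i / δ)) hδ.le]
    calc dist x (grid v) ≤ √n * (δ / 2) := by
          simpa using EuclideanSpace.dist_le_sqrt_card_mul (by positivity) hcoord
      _ < a := by
          rw [hδ_def]
          have := Real.sqrt_nonneg n
          field_simp
          nlinarith

theorem ENNReal.min_one_mul_max_one_inv {b : ℝ≥0∞} (hb₀ : b ≠ 0) (hb : b ≠ ⊤) :
    min 1 b * max 1 b⁻¹ = 1 := by
  rcases le_total b 1 with h | h
  · rw [min_eq_right h, max_eq_right (ENNReal.one_le_inv.2 h), ENNReal.mul_inv_cancel hb₀ hb]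
  · rw [min_eq_left h, max_eq_left (ENNReal.inv_le_one.2 h), mul_one]

namespace BanachFunctionNorm.IsTranslationInvariant

variable {n : ℕ} {X : BanachFunctionNorm (EuclideanSpace ℝ (Fin n))}

theorem ρ_indicator_ball_le (hX : X.IsTranslationInvariant)
    (y : EuclideanSpace ℝ (Fin n)) {r a : ℝ} (hr : 0 ≤ r) (ha : 0 < a) :
    X.ρ ((ball y r).indicator 1) ≤
      (ENNReal.ofReal (2 * √n + 5) * max 1 (ENNReal.ofReal (r / a))) ^ n *
        X.ρ ((ball 0 a).indicator 1) := by
  obtain ⟨s, hs, hcover⟩ := EuclideanSpace.exists_finset_card_le_ball_subset_iUnion_ball n hr ha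
  refine (hX.ρ_indicator_ball_le_card_mul y hcover).trans (mul_le_mul_left ?_ _)
  rw [← ENNReal.ofReal_one, ← ENNReal.ofReal_max, ← ENNReal.ofReal_mul (by positivity),
    ← ENNReal.ofReal_pow (by positivity), ← ENNReal.ofReal_natCast]
  exact ENNReal.ofReal_le_ofReal hs

theorem ρ_indicator_ball_le_mul_max (hX : X.IsTranslationInvariant)
    (y : EuclideanSpace ℝ (Fin n)) {R : ℝ} (hR : 0 < R) :
    X.ρ ((ball y R).indicator 1) ≤
      ENNReal.ofReal (2 * √n + 5) ^ n * X.ρ ((ball 0 1).indicator 1) *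
        max 1 (ENNReal.ofReal R ^ n) :=
  calc X.ρ ((ball y R).indicator 1)
      ≤ (ENNReal.ofReal (2 * √n + 5) * max 1 (ENNReal.ofReal R)) ^ n *
          X.ρ ((ball 0 1).indicator 1) := by
        simpa only [div_one] using hX.ρ_indicator_ball_le y hR.le one_pos
    _ = _ := by rw [mul_pow, (pow_left_mono n).map_max, one_pow]; ring

theorem mul_min_le_ρ_indicator_ball (hX : X.IsTranslationInvariant)
    (y : EuclideanSpace ℝ (Fin n)) {R : ℝ} (hR : 0 < R) :
    X.ρ ((ball 0 1).indicator 1) * min 1 (ENNReal.ofReal R ^ n) ≤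
      ENNReal.ofReal (2 * √n + 5) ^ n * X.ρ ((ball y R).indicator 1) := by
  set K := ENNReal.ofReal (2 * √n + 5)
  set b := ENNReal.ofReal R
  have hcover : X.ρ ((ball 0 1).indicator 1) ≤
      (K * max 1 b⁻¹) ^ n * X.ρ ((ball y R).indicator 1) := by
    simpa only [one_div, ENNReal.ofReal_inv_of_pos hR, hX.ρ_indicator_ball y R]
      using hX.ρ_indicator_ball_le 0 zero_le_one hR
  rw [show min 1 (b ^ n) = min 1 b ^ n by rw [(pow_left_mono n).map_min, one_pow]]
  calc X.ρ ((ball 0 1).indicator 1) * min 1 b ^ n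
      ≤ (K * max 1 b⁻¹) ^ n * X.ρ ((ball y R).indicator 1) * min 1 b ^ n := by gcongr
    _ = K ^ n * (min 1 b * max 1 b⁻¹) ^ n * X.ρ ((ball y R).indicator 1) := by ring
    _ = K ^ n * X.ρ ((ball y R).indicator 1) := by
      rw [ENNReal.min_one_mul_max_one_inv (ENNReal.ofReal_pos.2 hR).ne' ENNReal.ofReal_ne_top,
        one_pow, mul_one]

end BanachFunctionNorm.IsTranslationInvariant

/-- In a translation-invariant Banach function space on ℝⁿ, there are constants
`C₁, C₂ > 0` with `C₁ min{1,Rⁿ} ≤ ‖χ_{B(y,R)}‖_X ≤ C₂ max{1,Rⁿ}` for all `R > 0`, `y`. -/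
theorem translationInvariant_ball_norm_two_sided_estimate {n : ℕ}
    (X : BanachFunctionNorm (EuclideanSpace ℝ (Fin n)))
    (hTI : ∀ (y : EuclideanSpace ℝ (Fin n)) (f : EuclideanSpace ℝ (Fin n) → ℝ≥0∞),
        X.ρ (fun x => f (x - y)) = X.ρ f) :
    ∃ C₁ C₂ : ℝ≥0∞, 0 < C₁ ∧ C₂ < ⊤ ∧ ∀ R : ℝ, 0 < R → ∀ y : EuclideanSpace ℝ (Fin n),
      C₁ * min 1 (ENNReal.ofReal R ^ n) ≤ X.ρ ((Metric.ball y R).indicator 1) ∧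
      X.ρ ((Metric.ball y R).indicator 1) ≤ C₂ * max 1 (ENNReal.ofReal R ^ n) := by
  have hX : X.IsTranslationInvariant := hTI
  set c := X.ρ ((ball (0 : EuclideanSpace ℝ (Fin n)) 1).indicator 1)
  set κ := ENNReal.ofReal (2 * √n + 5) ^ n
  have hc0 : c ≠ 0 := X.ρ_indicator_one_ne_zero (measure_ball_pos _ _ one_pos).ne'
  have hcT : c < ⊤ := X.ρ_finite _ measurableSet_ball measure_ball_lt_top
  have hκT : κ ≠ ⊤ := pow_ne_top ENNReal.ofReal_ne_top
  refine ⟨c / κ, κ * c, ENNReal.div_pos hc0 hκT, ENNReal.mul_lt_top hκT.lt_top hcT,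
    fun R hR y => ⟨?_, hX.ρ_indicator_ball_le_mul_max y hR⟩⟩
  rw [← ENNReal.mul_div_right_comm]
  exact ENNReal.div_le_of_le_mul' (hX.mul_min_le_ρ_indicator_ball y hR)
end
end

section
/- Let Y(ℝⁿ) be a translation-invariant Banach function space, Ω ⊆ ℝⁿ of positive measure, and let w, w* be weights with w ∈ Y_loc, 1/w ∈ Y'_loc, w* ∈ L¹_loc. Suppose w*(y) w(x − y) w(x)^{-1} ≥ 1 for all x ∈ ℝⁿ and all y ∈ Ω. Then for every κ ∈ L¹(ℝⁿ, w*) supported in Ω and every f ∈ Y(ℝⁿ, w): ‖κ ∗ f‖_{Y(ℝⁿ,w)} ≤ ‖κ‖_{L¹(ℝⁿ,w*)} ‖f‖_{Y(ℝⁿ,w)}. -/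
/-!
Pointwise, `|κ ∗ f|(x) w(x) ≤ ∫ |κ(y)| w*(y) · |f(x - y)| w(x - y) dy` by the weight condition on
the support `Ω` of `κ`; so with `c = |κ| w*` and `g = |f| w` it suffices to show
`ρ(c ⋆ g) ≤ ‖c‖₁ ρ(g)` for a translation-invariant Banach function norm `ρ`. Pairing `c ⋆ g` with
a `φ` of associate norm at most one and applying Tonelli gives
`∫ c(y) ∫ g(x - y) φ(x) dx dy ≤ ‖c‖₁ ρ(g)`, by Hölder's inequality for the associate norm and
translation invariance. What remains is that `ρ` is recovered from such pairings (the
Lorentz–Luxemburg theorem `ρ = ρ''`). By the Fatou property it suffices to treat bounded functions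
supported on a set `E` of finite measure. There the `r`-ball of `ρ` is a closed convex subset of
`L²(E)` (closed by Fatou again), and Hahn–Banach with the Riesz representation produces the
norming function `φ`.
-/

open MeasureTheory Filter ENNReal Metric

noncomputable section

open scoped Topology

lemma exists_inner_lt_one_lt_inner {H : Type*} [NormedAddCommGroup H] [InnerProductSpace ℝ H]
    [CompleteSpace H] {S : Set H} (hconv : Convex ℝ S) (hclosed : IsClosed S) (h0 : 0 ∈ S)
    {x : H} (hx : x ∉ S) : ∃ y : H, (∀ s ∈ S, inner ℝ y s < 1) ∧ 1 < inner ℝ y x := by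
  obtain ⟨f, u, hfS, hfx⟩ := geometric_hahn_banach_closed_point hconv hclosed hx
  have hu : 0 < u := by simpa using hfS 0 h0
  refine ⟨(InnerProductSpace.toDual ℝ H).symm (u⁻¹ • f), fun s hs => ?_, ?_⟩
  · rw [InnerProductSpace.toDual_symm_apply]
    exact (inv_mul_lt_one₀ hu).2 (hfS s hs)
  · rw [InnerProductSpace.toDual_symm_apply]
    exact (one_lt_inv_mul₀ hu).2 hfx

lemma ENNReal.iSup_min_natCast (a : ℝ≥0∞) : ⨆ m : ℕ, min a (m : ℝ≥0∞) = a := by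
  rw [← inf_iSup_eq, ENNReal.iSup_natCast]
  exact min_top_right a

lemma exists_measurable_le_lintegral_mul_eq {α : Type*} [MeasurableSpace α] (μ : Measure α)
    {φ : α → ℝ≥0∞} (hφ : Measurable φ) (hφfin : ∀ x, φ x ≠ ⊤) (f : α → ℝ≥0∞) :
    ∃ g, Measurable g ∧ g ≤ f ∧ ∫⁻ x, f x * φ x ∂μ = ∫⁻ x, g x * φ x ∂μ := by
  obtain ⟨g, hg, hgf, heq⟩ := exists_measurable_le_lintegral_eq (μ.withDensity φ) f
  refine ⟨g, hg, hgf, ?_⟩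
  have hfin : ∀ᵐ x ∂μ, φ x < ⊤ := ae_of_all _ fun x => (hφfin x).lt_top
  simpa only [lintegral_withDensity_eq_lintegral_mul_non_measurable μ hφ hfin, Pi.mul_apply,
    mul_comm (φ _)] using heq

lemma lintegral_mul_ofReal_eq_ofReal_integral {α : Type*} [MeasurableSpace α] {μ : Measure α}
    {g : α → ℝ≥0∞} (hg : Measurable g) {C : ℝ≥0∞} (hC : C ≠ ⊤) (hbdd : ∀ x, g x ≤ C)
    {ψ : α → ℝ} (hψ : Integrable ψ μ) :
    ∫⁻ x, g x * ENNReal.ofReal (ψ x) ∂μ = ENNReal.ofReal (∫ x, (g x).toReal * max (ψ x) 0 ∂μ) := by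
  have hgfin : ∀ x, g x ≠ ⊤ := fun x => ((hbdd x).trans_lt hC.lt_top).ne
  have hint : Integrable (fun x => (g x).toReal * max (ψ x) 0) μ :=
    hψ.pos_part.bdd_mul hg.ennreal_toReal.aestronglyMeasurable (c := C.toReal)
      (ae_of_all _ fun x => by
        rw [Real.norm_eq_abs, abs_of_nonneg ENNReal.toReal_nonneg]
        exact ENNReal.toReal_mono hC (hbdd x))
  rw [ofReal_integral_eq_lintegral_ofReal hint
    (ae_of_all _ fun x => mul_nonneg ENNReal.toReal_nonneg (le_max_right _ _))]
  refine lintegral_congr fun x => ?_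
  rw [ENNReal.ofReal_mul ENNReal.toReal_nonneg, ENNReal.ofReal_toReal (hgfin x),
    ENNReal.ofReal_max, ENNReal.ofReal_zero, max_zero]

lemma lintegral_mul_indicator_const_mul {α : Type*} [MeasurableSpace α] {μ : Measure α}
    {E : Set α} (hE : MeasurableSet E) {r : ℝ≥0∞} (hr : r ≠ ⊤) (f k : α → ℝ≥0∞) :
    ∫⁻ x, f x * E.indicator (fun x => r * k x) x ∂μ = r * ∫⁻ x in E, f x * k x ∂μ := by
  rw [← lintegral_const_mul' r _ hr, ← lintegral_indicator hE]
  refine lintegral_congr fun x => ?_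
  by_cases hxE : x ∈ E
  · simp only [Set.indicator_of_mem hxE]; ring
  · simp [hxE]

def ofRealOn {α : Type*} (E : Set α) (u : α → ℝ) : α → ℝ≥0∞ :=
  E.indicator fun x => ENNReal.ofReal (u x)

lemma ofRealOn_congr_ae {α : Type*} [MeasurableSpace α] {μ : Measure α} {E : Set α}
    (hE : MeasurableSet E) {u v : α → ℝ} (huv : u =ᵐ[μ.restrict E] v) :
    ofRealOn E u =ᵐ[μ] ofRealOn E v :=
  ((ae_restrict_iff' hE).1 huv).mono fun x hx => by
    by_cases hxE : x ∈ E <;> simp [ofRealOn, hxE, hx]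

namespace BanachFunctionNorm

variable {α : Type} [MeasureSpace α] (X : BanachFunctionNorm α)

lemma ρ_congr {f g : α → ℝ≥0∞} (h : f =ᵐ[volume] g) : X.ρ f = X.ρ g :=
  le_antisymm (X.ρ_mono f g h.le) (X.ρ_mono g f h.symm.le)

lemma ρ_const_mul {c : ℝ≥0∞} (hc : c ≠ ⊤) (f : α → ℝ≥0∞) :
    X.ρ (fun x => c * f x) = c * X.ρ f := by
  simpa only [ENNReal.coe_toNNReal hc] using X.ρ_smul c.toNNReal f

lemma lintegral_mul_le_of_associate_le_one {φ : α → ℝ≥0∞} (hφ : X.associate φ ≤ 1)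
    (f : α → ℝ≥0∞) : ∫⁻ x, f x * φ x ≤ X.ρ f := by
  rcases eq_or_ne (X.ρ f) ⊤ with htop | hfin
  · simp [htop]
  rcases eq_or_ne (X.ρ f) 0 with hzero | hpos
  · have hf0 : f =ᵐ[volume] 0 := (X.ρ_zero f).1 hzero
    rw [hzero, lintegral_congr_ae (g := 0) (hf0.mono fun x hx => by simp [hx])]
    simp
  have hunit : X.ρ (fun x => (X.ρ f)⁻¹ * f x) ≤ 1 := by
    rw [X.ρ_const_mul (ENNReal.inv_ne_top.2 hpos), ENNReal.inv_mul_cancel hpos hfin]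
  calc ∫⁻ x, f x * φ x = X.ρ f * ∫⁻ x, (X.ρ f)⁻¹ * f x * φ x := by
        rw [← lintegral_const_mul' _ _ hfin]
        refine lintegral_congr fun x => ?_
        rw [← mul_assoc, ← mul_assoc, ENNReal.mul_inv_cancel hpos hfin, one_mul]
    _ ≤ X.ρ f * X.associate φ := by
        gcongr
        exact le_iSup₂ (f := fun g (_ : g ∈ {f | X.ρ f ≤ 1}) => ∫⁻ x, g x * φ x) _ hunit
    _ ≤ X.ρ f := mul_le_of_le_one_right' hφ

lemma ρ_le_of_ae_tendsto {F : ℕ → α → ℝ≥0∞} {g : α → ℝ≥0∞} {r : ℝ≥0∞}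
    (hF : ∀ j, X.ρ (F j) ≤ r)
    (hlim : ∀ᵐ x ∂volume, Tendsto (fun j => F j x) atTop (𝓝 (g x))) : X.ρ g ≤ r := by
  set A : ℕ → α → ℝ≥0∞ := fun m x => ⨅ j ≥ m, F j x
  have hA_mono : ∀ m, ∀ᵐ x ∂volume, A m x ≤ A (m + 1) x := fun m =>
    ae_of_all _ fun x => le_iInf₂ fun j hj => iInf₂_le j (m.le_succ.trans hj)
  have hg : g =ᵐ[volume] fun x => ⨆ m, A m x := hlim.mono fun x hx =>
    hx.liminf_eq.symm.trans liminf_eq_iSup_iInf_of_nat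
  calc X.ρ g = ⨆ m, X.ρ (A m) := by rw [X.ρ_congr hg, X.ρ_fatou A hA_mono]
    _ ≤ r := iSup_le fun m =>
        (X.ρ_mono _ (F m) (ae_of_all _ fun x => iInf₂_le m le_rfl)).trans (hF m)

section FiniteMeasureSet

variable {E : Set α}

def ballL2 (E : Set α) (r : ℝ≥0∞) : Set (Lp ℝ 2 (volume.restrict E)) :=
  {u | X.ρ (ofRealOn E u) ≤ r}

lemma mem_ballL2_toLp (hE : MeasurableSet E) {r : ℝ≥0∞} {v : α → ℝ}
    (hv : MemLp v 2 (volume.restrict E)) : hv.toLp v ∈ X.ballL2 E r ↔ X.ρ (ofRealOn E v) ≤ r := by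
  rw [ballL2, Set.mem_ofPred_eq, X.ρ_congr (ofRealOn_congr_ae hE hv.coeFn_toLp)]

lemma zero_mem_ballL2 (hE : MeasurableSet E) (r : ℝ≥0∞) : 0 ∈ X.ballL2 E r := by
  rw [ballL2, Set.mem_ofPred_eq, X.ρ_congr (ofRealOn_congr_ae hE (Lp.coeFn_zero ℝ 2 _)),
    (X.ρ_zero _).2 (ae_of_all _ fun x => by simp [ofRealOn])]
  exact zero_le

lemma convex_ballL2 (hE : MeasurableSet E) (r : ℝ≥0∞) : Convex ℝ (X.ballL2 E r) := by
  intro u hu v hv a b ha hb hab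
  have hcomb : ofRealOn E ⇑(a • u + b • v) =ᵐ[volume] ofRealOn E fun x => a * u x + b * v x := by
    refine ofRealOn_congr_ae hE ?_
    filter_upwards [Lp.coeFn_add (a • u) (b • v), Lp.coeFn_smul a u, Lp.coeFn_smul b v]
      with x h1 h2 h3
    simp only [h1, Pi.add_apply, h2, h3, Pi.smul_apply, smul_eq_mul]
  have hle : ∀ x, ofRealOn E (fun x => a * u x + b * v x) x
      ≤ ENNReal.ofReal a * ofRealOn E u x + ENNReal.ofReal b * ofRealOn E v x := by
    intro x
    by_cases hxE : x ∈ E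
    · simp only [ofRealOn, Set.indicator_of_mem hxE, ← ENNReal.ofReal_mul ha,
        ← ENNReal.ofReal_mul hb]
      exact ENNReal.ofReal_add_le
    · simp [ofRealOn, hxE]
  change X.ρ (ofRealOn E ⇑(a • u + b • v)) ≤ r
  calc X.ρ (ofRealOn E ⇑(a • u + b • v))
      ≤ X.ρ (fun x => ENNReal.ofReal a * ofRealOn E u x + ENNReal.ofReal b * ofRealOn E v x) := by
        rw [X.ρ_congr hcomb]; exact X.ρ_mono _ _ (ae_of_all _ hle)
    _ ≤ ENNReal.ofReal a * X.ρ (ofRealOn E u) + ENNReal.ofReal b * X.ρ (ofRealOn E v) := by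
        rw [← X.ρ_const_mul ENNReal.ofReal_ne_top, ← X.ρ_const_mul ENNReal.ofReal_ne_top]
        exact X.ρ_add _ _
    _ ≤ ENNReal.ofReal a * r + ENNReal.ofReal b * r := by gcongr <;> assumption
    _ = r := by rw [← add_mul, ← ENNReal.ofReal_add ha hb, hab, ENNReal.ofReal_one, one_mul]

lemma isClosed_ballL2 (hE : MeasurableSet E) (r : ℝ≥0∞) : IsClosed (X.ballL2 E r) := by
  refine IsSeqClosed.isClosed fun us u hus hlim => ?_
  obtain ⟨ns, -, hae⟩ := (tendstoInMeasure_of_tendsto_Lp hlim).exists_seq_tendsto_ae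
  refine X.ρ_le_of_ae_tendsto (fun i => hus (ns i)) (((ae_restrict_iff' hE).1 hae).mono ?_)
  intro x hx
  by_cases hxE : x ∈ E
  · simp only [ofRealOn, Set.indicator_of_mem hxE]
    exact (ENNReal.continuous_ofReal.tendsto _).comp (hx hxE)
  · simpa only [ofRealOn, Set.indicator_of_notMem hxE] using tendsto_const_nhds

/-- `ψ` lies in the polar of the `r`-ball of `X`, tested against bounded functions on `E`. -/
def IsPolarOn (E : Set α) (r : ℝ≥0∞) (ψ : α → ℝ) : Prop :=
  ∀ v : α → ℝ, Measurable v → (∃ c, ∀ x, |v x| ≤ c) →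
    X.ρ (ofRealOn E v) ≤ r → ∫ x in E, v x * ψ x < 1

lemma exists_isPolarOn_one_lt_setIntegral (hE : MeasurableSet E) (hEfin : volume E ≠ ⊤)
    {h : α → ℝ≥0∞} (hm : Measurable h) {C : ℝ≥0∞} (hC : C ≠ ⊤) (hbdd : ∀ x, h x ≤ C)
    (hsupp : ∀ x ∉ E, h x = 0) {r : ℝ≥0∞} (hr : r < X.ρ h) :
    ∃ ψ : α → ℝ, Measurable ψ ∧ Integrable ψ (volume.restrict E) ∧ X.IsPolarOn E r ψ ∧
      1 < ∫ x in E, (h x).toReal * ψ x := by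
  have : IsFiniteMeasure (volume.restrict E) := isFiniteMeasure_restrict.2 hEfin
  have hmemLp : ∀ {v : α → ℝ}, Measurable v → (∃ c, ∀ x, |v x| ≤ c) →
      MemLp v 2 (volume.restrict E) :=
    fun hv ⟨c, hc⟩ => MemLp.of_bound hv.aestronglyMeasurable c (ae_of_all _ hc)
  have hmemLp_h : MemLp (fun x => (h x).toReal) 2 (volume.restrict E) :=
    hmemLp hm.ennreal_toReal ⟨C.toReal, fun x => by
      rw [abs_of_nonneg ENNReal.toReal_nonneg]; exact ENNReal.toReal_mono hC (hbdd x)⟩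
  have hofRealOn_h : ofRealOn E (fun x => (h x).toReal) = h := funext fun x => by
    by_cases hxE : x ∈ E
    · simp [ofRealOn, hxE, ENNReal.ofReal_toReal ((hbdd x).trans_lt hC.lt_top).ne]
    · simp [ofRealOn, hxE, hsupp x hxE]
  obtain ⟨y, hyS, hyh⟩ := exists_inner_lt_one_lt_inner (X.convex_ballL2 hE r)
    (X.isClosed_ballL2 hE r) (X.zero_mem_ballL2 hE r) (x := hmemLp_h.toLp _)
    (by rw [X.mem_ballL2_toLp hE, hofRealOn_h]; exact hr.not_ge)
  set ψ := (Lp.aestronglyMeasurable y).mk y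
  have hψ : (y : α → ℝ) =ᵐ[volume.restrict E] ψ := (Lp.aestronglyMeasurable y).ae_eq_mk
  have hinner : ∀ {v : α → ℝ} (hv : MemLp v 2 (volume.restrict E)),
      inner ℝ y (hv.toLp v) = ∫ x in E, v x * ψ x := by
    intro v hv
    rw [L2.inner_def]
    refine integral_congr_ae ?_
    filter_upwards [hψ, hv.coeFn_toLp] with x hx1 hx2
    simp [hx1, hx2]
  refine ⟨ψ, (Lp.aestronglyMeasurable y).stronglyMeasurable_mk.measurable,
    ((Lp.memLp y).integrable one_le_two).congr hψ, fun v hv hvbdd hvρ => ?_, ?_⟩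
  · rw [← hinner (hmemLp hv hvbdd)]
    exact hyS _ ((X.mem_ballL2_toLp hE _).2 hvρ)
  · rwa [← hinner hmemLp_h]

lemma setLIntegral_mul_ofReal_le_one {r : ℝ≥0∞} {ψ : α → ℝ}
    (hψm : Measurable ψ) (hψ : Integrable ψ (volume.restrict E)) (hpolar : X.IsPolarOn E r ψ)
    {g : α → ℝ≥0∞} (hg : Measurable g) {C : ℝ≥0∞} (hC : C ≠ ⊤) (hbdd : ∀ x, g x ≤ C)
    (hgr : X.ρ g ≤ r) : ∫⁻ x in E, g x * ENNReal.ofReal (ψ x) ≤ 1 := by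
  -- cut `g` down to where `ψ ≥ 0`, so that pairing with `ψ` is pairing with its positive part
  set v : α → ℝ := fun x => if 0 ≤ ψ x then (g x).toReal else 0
  have hv : Measurable v :=
    Measurable.ite (measurableSet_le measurable_const hψm) hg.ennreal_toReal measurable_const
  have hvbdd : ∀ x, |v x| ≤ C.toReal := fun x => by
    by_cases hx : 0 ≤ ψ x <;> simp only [v, hx, if_true, if_false, abs_zero, ENNReal.toReal_nonneg,
      abs_of_nonneg, ENNReal.toReal_mono hC (hbdd x)]
  have hvρ : X.ρ (ofRealOn E v) ≤ r := by
    refine (X.ρ_mono _ g (ae_of_all _ fun x => ?_)).trans hgr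
    by_cases hxE : x ∈ E <;> by_cases hx : 0 ≤ ψ x <;>
      simp [ofRealOn, v, hxE, hx, ENNReal.ofReal_toReal_le]
  have hpair : ∫ x in E, (g x).toReal * max (ψ x) 0 = ∫ x in E, v x * ψ x := by
    refine integral_congr_ae (ae_of_all _ fun x => ?_)
    by_cases hx : 0 ≤ ψ x
    · simp [v, hx]
    · simp [v, hx, (not_le.1 hx).le]
  rw [lintegral_mul_ofReal_eq_ofReal_integral hg hC hbdd hψ, hpair, ← ENNReal.ofReal_one]
  exact ENNReal.ofReal_le_ofReal (hpolar v hv ⟨_, hvbdd⟩ hvρ).le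

lemma associate_le_one_of_isPolarOn (hE : MeasurableSet E) {r : ℝ≥0∞} (hrtop : r ≠ ⊤)
    {ψ : α → ℝ} (hψm : Measurable ψ) (hψ : Integrable ψ (volume.restrict E))
    (hpolar : X.IsPolarOn E r ψ) :
    X.associate (E.indicator fun x => r * ENNReal.ofReal (ψ x)) ≤ 1 := by
  refine iSup₂_le fun f hf => ?_
  have hφm : Measurable (E.indicator fun x => r * ENNReal.ofReal (ψ x)) :=
    (measurable_const.mul hψm.ennreal_ofReal).indicator hE
  obtain ⟨g, hgm, hgf, hfg⟩ := exists_measurable_le_lintegral_mul_eq volume hφm (fun x => by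
    by_cases hxE : x ∈ E <;> simp [hxE, ENNReal.mul_ne_top hrtop]) f
  have hgρ : X.ρ (fun x => r * g x) ≤ r := by
    rw [X.ρ_const_mul hrtop]
    exact mul_le_of_le_one_right' ((X.ρ_mono g f (ae_of_all _ hgf)).trans hf)
  -- `IsPolarOn` only tests bounded functions: truncate `r * g` at height `m`, then let `m → ∞`
  have htrunc : ∀ m : ℕ, ∫⁻ x in E, min (r * g x) m * ENNReal.ofReal (ψ x) ≤ 1 := fun m =>
    X.setLIntegral_mul_ofReal_le_one hψm hψ hpolar ((measurable_const.mul hgm).min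
      measurable_const) (ENNReal.natCast_ne_top m) (fun x => min_le_right _ _)
      ((X.ρ_mono _ _ (ae_of_all _ fun x => min_le_left _ _)).trans hgρ)
  have hmono : Monotone fun (m : ℕ) x => min (r * g x) m * ENNReal.ofReal (ψ x) :=
    fun i j hij x => mul_le_mul_left (min_le_min le_rfl (Nat.cast_le.2 hij)) _
  calc ∫⁻ x, f x * _ = ∫⁻ x in E, r * g x * ENNReal.ofReal (ψ x) := by
        rw [hfg, lintegral_mul_indicator_const_mul hE hrtop, ← lintegral_const_mul' r _ hrtop]
        simp only [mul_assoc]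
    _ = ⨆ m : ℕ, ∫⁻ x in E, min (r * g x) m * ENNReal.ofReal (ψ x) := by
        refine (lintegral_congr fun x => ?_).trans (lintegral_iSup (fun m =>
          ((measurable_const.mul hgm).min measurable_const).mul hψm.ennreal_ofReal) hmono)
        rw [← ENNReal.iSup_mul, ENNReal.iSup_min_natCast]
    _ ≤ 1 := iSup_le htrunc

lemma exists_associate_le_one_lt_lintegral_of_bdd (hE : MeasurableSet E)
    (hEfin : volume E ≠ ⊤) {h : α → ℝ≥0∞} (hm : Measurable h) {C : ℝ≥0∞} (hC : C ≠ ⊤)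
    (hbdd : ∀ x, h x ≤ C) (hsupp : ∀ x ∉ E, h x = 0) {r : ℝ≥0∞} (hr0 : r ≠ 0)
    (hr : r < X.ρ h) : ∃ φ, Measurable φ ∧ X.associate φ ≤ 1 ∧ r < ∫⁻ x, h x * φ x := by
  obtain ⟨ψ, hψm, hψ, hpolar, hψh⟩ :=
    X.exists_isPolarOn_one_lt_setIntegral hE hEfin hm hC hbdd hsupp hr
  have hrtop : r ≠ ⊤ := hr.ne_top
  refine ⟨E.indicator fun x => r * ENNReal.ofReal (ψ x),
    (measurable_const.mul hψm.ennreal_ofReal).indicator hE,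
    X.associate_le_one_of_isPolarOn hE hrtop hψm hψ hpolar, ?_⟩
  have hhbdd : ∀ᵐ x ∂volume.restrict E, ‖(h x).toReal‖ ≤ C.toReal := ae_of_all _ fun x => by
    rw [Real.norm_eq_abs, abs_of_nonneg ENNReal.toReal_nonneg]
    exact ENNReal.toReal_mono hC (hbdd x)
  have hlow : 1 < ∫⁻ x in E, h x * ENNReal.ofReal (ψ x) := by
    rw [lintegral_mul_ofReal_eq_ofReal_integral hm hC hbdd hψ, ← ENNReal.ofReal_one,
      ENNReal.ofReal_lt_ofReal_iff_of_nonneg zero_le_one]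
    refine hψh.trans_le (integral_mono ?_ ?_ fun x => ?_)
    · exact hψ.bdd_mul hm.ennreal_toReal.aestronglyMeasurable hhbdd
    · exact hψ.pos_part.bdd_mul hm.ennreal_toReal.aestronglyMeasurable hhbdd
    · exact mul_le_mul_of_nonneg_left (le_max_left _ _) ENNReal.toReal_nonneg
  rw [lintegral_mul_indicator_const_mul hE hrtop]
  simpa using ENNReal.mul_lt_mul_right hr0 hrtop hlow

end FiniteMeasureSet

lemma exists_associate_le_one_lt_lintegral [SigmaFinite (volume : Measure α)] {h : α → ℝ≥0∞}
    (hm : Measurable h) {r : ℝ≥0∞} (hr : r < X.ρ h) :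
    ∃ φ, Measurable φ ∧ X.associate φ ≤ 1 ∧ r < ∫⁻ x, h x * φ x := by
  set T : ℕ → α → ℝ≥0∞ := fun m => (spanningSets volume m).indicator fun x => min (h x) m
  have hT_le : ∀ m x, T m x ≤ min (h x) m := fun m => Set.indicator_le_self _ _
  have hT_mono : ∀ m x, T m x ≤ T (m + 1) x := fun m x =>
    (Set.indicator_le_indicator_of_subset (monotone_spanningSets volume m.le_succ)
      (fun _ => zero_le) x).trans
      (Set.indicator_le_indicator (min_le_min le_rfl (Nat.cast_le.2 m.le_succ)))
  have hT_sup : ∀ x, ⨆ m, T m x = h x := fun x => by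
    refine le_antisymm (iSup_le fun m => (hT_le m x).trans (min_le_left _ _)) ?_
    conv_lhs => rw [← ENNReal.iSup_min_natCast (h x)]
    refine iSup_le fun k => le_iSup_of_le (max k (spanningSetsIndex volume x)) ?_
    simp only [T, Set.indicator_of_mem (mem_spanningSets_of_index_le _ _ (le_max_right _ _))]
    exact min_le_min le_rfl (Nat.cast_le.2 (le_max_left _ _))
  have hρT : X.ρ h = ⨆ m, X.ρ (T m) := by
    rw [← X.ρ_fatou T fun m => ae_of_all _ (hT_mono m)]
    simp only [hT_sup]
  obtain ⟨m, hTm⟩ := lt_iSup_iff.1 (hρT ▸ hr)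
  obtain ⟨r', hrr', hr'⟩ := exists_between hTm
  obtain ⟨φ, hφm, hφ, hlt⟩ := X.exists_associate_le_one_lt_lintegral_of_bdd
    (measurableSet_spanningSets volume m) (measure_spanningSets_lt_top volume m).ne
    ((hm.min measurable_const).indicator (measurableSet_spanningSets volume m))
    (ENNReal.natCast_ne_top m) (fun x => (hT_le m x).trans (min_le_right _ _))
    (fun x hx => Set.indicator_of_notMem hx _) (zero_le.trans_lt hrr').ne' hr'
  refine ⟨φ, hφm, hφ, hrr'.trans (hlt.trans_le (lintegral_mono fun x => ?_))⟩
  exact mul_le_mul_left ((hT_le m x).trans (min_le_left _ _)) _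

lemma ρ_le_of_forall_lintegral_mul_le [SigmaFinite (volume : Measure α)] {h : α → ℝ≥0∞}
    (hm : Measurable h) {r : ℝ≥0∞}
    (hpair : ∀ φ, Measurable φ → X.associate φ ≤ 1 → ∫⁻ x, h x * φ x ≤ r) : X.ρ h ≤ r := by
  by_contra! hr
  obtain ⟨φ, hφm, hφ, hlt⟩ := X.exists_associate_le_one_lt_lintegral hm hr
  exact (hpair φ hφm hφ).not_gt hlt

lemma ρ_lconvolution_le [SigmaFinite (volume : Measure α)] [Add α] [Neg α] [MeasurableAdd₂ α]
    [MeasurableNeg α] {c g : α → ℝ≥0∞} (hc : Measurable c) (hg : Measurable g)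
    (hTI : ∀ y, X.ρ (fun x => g (-y + x)) ≤ X.ρ g) :
    X.ρ (c ⋆ₗ g) ≤ (∫⁻ y, c y) * X.ρ g := by
  refine X.ρ_le_of_forall_lintegral_mul_le (measurable_lconvolution _ hc hg) fun φ hφm hφ => ?_
  calc ∫⁻ x, (c ⋆ₗ g) x * φ x = ∫⁻ x, ∫⁻ y, c y * (g (-y + x) * φ x) := by
        refine lintegral_congr fun x => ?_
        rw [lconvolution_def, ← lintegral_mul_const _ (by fun_prop)]
        simp only [mul_assoc]
    _ = ∫⁻ y, c y * ∫⁻ x, g (-y + x) * φ x := by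
        rw [lintegral_lintegral_swap (by fun_prop)]
        exact lintegral_congr fun y => lintegral_const_mul _ (by fun_prop)
    _ ≤ ∫⁻ y, c y * X.ρ g := lintegral_mono fun y =>
        mul_le_mul_right ((X.lintegral_mul_le_of_associate_le_one hφ _).trans (hTI y)) _
    _ = (∫⁻ y, c y) * X.ρ g := lintegral_mul_const _ hc

end BanachFunctionNorm

lemma enorm_integral_mul_le_lintegral_weighted {α 𝕜 : Type*} [MeasurableSpace α] {μ : Measure α}
    [Sub α] [NormedRing 𝕜] [NormedSpace ℝ 𝕜] {Ω : Set α} {w wstar : α → ℝ≥0∞} {x : α}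
    (hwx : w x ≠ 0) (hwx' : w x ≠ ⊤) (hkey : ∀ y ∈ Ω, 1 ≤ wstar y * w (x - y) * (w x)⁻¹)
    {κ f : α → 𝕜} (hκsupp : ∀ y ∉ Ω, κ y = 0) :
    ‖∫ y, κ y * f (x - y) ∂μ‖ₑ * w x
      ≤ ∫⁻ y, ‖κ y‖ₑ * wstar y * (‖f (x - y)‖ₑ * w (x - y)) ∂μ := by
  calc ‖∫ y, κ y * f (x - y) ∂μ‖ₑ * w x ≤ (∫⁻ y, ‖κ y * f (x - y)‖ₑ ∂μ) * w x :=
        mul_le_mul_left (enorm_integral_le_lintegral_enorm _) _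
    _ = ∫⁻ y, ‖κ y * f (x - y)‖ₑ * w x ∂μ := (lintegral_mul_const' _ _ hwx').symm
    _ ≤ _ := lintegral_mono fun y => ?_
  by_cases hy : y ∈ Ω
  · have hw : w x ≤ wstar y * w (x - y) := by
      simpa [← div_eq_mul_inv, ENNReal.le_div_iff_mul_le (Or.inl hwx) (Or.inl hwx')]
        using hkey y hy
    calc ‖κ y * f (x - y)‖ₑ * w x ≤ ‖κ y‖ₑ * ‖f (x - y)‖ₑ * (wstar y * w (x - y)) :=
          mul_le_mul' (by simpa only [enorm_eq_nnnorm, ← ENNReal.coe_mul, ENNReal.coe_le_coe]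
            using nnnorm_mul_le _ _) hw
      _ = _ := by ring
  · simp [hκsupp y hy]

theorem convolution_estimate_weighted_TI_general {n : ℕ}
    (Y : BanachFunctionNorm (EuclideanSpace ℝ (Fin n)))
    (hTI : ∀ (y : EuclideanSpace ℝ (Fin n)) (f : EuclideanSpace ℝ (Fin n) → ℝ≥0∞),
        Y.ρ (fun x => f (x - y)) = Y.ρ f)
    (Ω : Set (EuclideanSpace ℝ (Fin n)))
    (w wstar : EuclideanSpace ℝ (Fin n) → ℝ≥0∞)
    (hwm : Measurable w) (hwstarm : Measurable wstar)
    (hw : ∀ x, 0 < w x ∧ w x < ⊤)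
    (hkey : ∀ x : EuclideanSpace ℝ (Fin n), ∀ y ∈ Ω, 1 ≤ wstar y * w (x - y) * (w x)⁻¹)
    (κ f : EuclideanSpace ℝ (Fin n) → ℂ)
    (hκm : AEStronglyMeasurable κ volume) (hfm : AEStronglyMeasurable f volume)
    (hκsupp : ∀ x ∉ Ω, κ x = 0) :
    Y.ρ (fun x => (‖∫ y, κ y * f (x - y)‖₊ : ℝ≥0∞) * w x)
      ≤ (∫⁻ y, (‖κ y‖₊ : ℝ≥0∞) * wstar y) * Y.ρ (fun x => (‖f x‖₊ : ℝ≥0∞) * w x) := by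
  obtain ⟨f', hf'm, hff'⟩ : ∃ f', Measurable f' ∧ f =ᵐ[volume] f' :=
    ⟨_, hfm.stronglyMeasurable_mk.measurable, hfm.ae_eq_mk⟩
  obtain ⟨κ', hκ'm, hκκ'⟩ : ∃ κ', Measurable κ' ∧ κ =ᵐ[volume] κ' :=
    ⟨_, hκm.stronglyMeasurable_mk.measurable, hκm.ae_eq_mk⟩
  set g := fun x => ‖f' x‖ₑ * w x
  set c := fun y => ‖κ' y‖ₑ * wstar y
  have hpointwise : ∀ x, ‖∫ y, κ y * f (x - y)‖ₑ * w x ≤ (c ⋆ₗ g) x := fun x => by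
    refine (enorm_integral_mul_le_lintegral_weighted (hw x).1.ne' (hw x).2.ne (hkey x)
      hκsupp).trans_eq (lintegral_congr_ae ?_)
    filter_upwards [(quasiMeasurePreserving_sub_left volume x).ae_eq_comp hff', hκκ']
      with y (hf : f (x - y) = f' (x - y)) hκ
    simp only [c, g, hf, hκ, neg_add_eq_sub]
  calc Y.ρ (fun x => ‖∫ y, κ y * f (x - y)‖ₑ * w x) ≤ Y.ρ (c ⋆ₗ g) :=
        Y.ρ_mono _ _ (ae_of_all _ hpointwise)
    _ ≤ (∫⁻ y, c y) * Y.ρ g := Y.ρ_lconvolution_le (by fun_prop) (by fun_prop) fun y => by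
        simpa only [neg_add_eq_sub] using (hTI y g).le
    _ = (∫⁻ y, ‖κ y‖ₑ * wstar y) * Y.ρ (fun x => ‖f x‖ₑ * w x) := by
        congr 1
        · exact lintegral_congr_ae (hκκ'.mono fun y hy => by simp only [c, hy])
        · exact Y.ρ_congr (hff'.mono fun x hx => by simp only [g, hx])

/-- Löfström-type convolution estimate: if `Y(ℝⁿ)` is translation-invariant,
`w ∈ Y_loc`, `1/w ∈ Y'_loc`, `w* ∈ L¹_loc`, and `w*(y) w(x-y) w(x)⁻¹ ≥ 1` for all `x` and
`y ∈ Ω`, then for every `κ ∈ L¹(ℝⁿ, w*)` supported in `Ω` and `f ∈ Y(ℝⁿ, w)`,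
`‖κ ∗ f‖_{Y(ℝⁿ,w)} ≤ ‖κ‖_{L¹(ℝⁿ,w*)} ‖f‖_{Y(ℝⁿ,w)}`. -/
theorem convolution_estimate_weighted_TI {n : ℕ}
    (Y : BanachFunctionNorm (EuclideanSpace ℝ (Fin n)))
    (hTI : ∀ (y : EuclideanSpace ℝ (Fin n)) (f : EuclideanSpace ℝ (Fin n) → ℝ≥0∞),
        Y.ρ (fun x => f (x - y)) = Y.ρ f)
    (Ω : Set (EuclideanSpace ℝ (Fin n))) (hΩm : MeasurableSet Ω) (hΩ : 0 < volume Ω)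
    (w wstar : EuclideanSpace ℝ (Fin n) → ℝ≥0∞)
    (hwm : Measurable w) (hwstarm : Measurable wstar)
    (hw : ∀ x, 0 < w x ∧ w x < ⊤) (hwstar : ∀ x, 0 < wstar x ∧ wstar x < ⊤)
    (hwloc : ∀ E : Set (EuclideanSpace ℝ (Fin n)), MeasurableSet E → volume E < ⊤ →
        Y.ρ (E.indicator w) < ⊤)
    (hwinvloc : ∀ E : Set (EuclideanSpace ℝ (Fin n)), MeasurableSet E → volume E < ⊤ →
        Y.associate (E.indicator fun x => (w x)⁻¹) < ⊤)
    (hwstarloc : ∀ E : Set (EuclideanSpace ℝ (Fin n)), MeasurableSet E → volume E < ⊤ →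
        ∫⁻ x in E, wstar x < ⊤)
    (hkey : ∀ x : EuclideanSpace ℝ (Fin n), ∀ y ∈ Ω, 1 ≤ wstar y * w (x - y) * (w x)⁻¹)
    (κ f : EuclideanSpace ℝ (Fin n) → ℂ)
    (hκm : AEStronglyMeasurable κ volume) (hfm : AEStronglyMeasurable f volume)
    (hκsupp : ∀ x ∉ Ω, κ x = 0)
    (hκ : ∫⁻ y, (‖κ y‖₊ : ℝ≥0∞) * wstar y < ⊤)
    (hf : Y.ρ (fun x => (‖f x‖₊ : ℝ≥0∞) * w x) < ⊤) :
    Y.ρ (fun x => (‖∫ y, κ y * f (x - y)‖₊ : ℝ≥0∞) * w x)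
      ≤ (∫⁻ y, (‖κ y‖₊ : ℝ≥0∞) * wstar y) * Y.ρ (fun x => (‖f x‖₊ : ℝ≥0∞) * w x) :=
  convolution_estimate_weighted_TI_general Y hTI Ω w wstar hwm hwstarm hw hkey κ f hκm hfm hκsupp
end
end
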